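/- arXiv:2101.04100 — 2 statements merged into one kernel-verified Lean document; each statement's English description precedes it below -/
import Mathlib

section
/- Let L(z) = M_T(z/2)·M_V(z)·M_T(z/2) be the leapfrog matrix for the harmonic oscillator, let α₁ = 1/(2 − 2^{1/3}·exp(2πi/3)), α₂ = 1 − 2α₁, and let R(h) be the entrywise real part of L(α₁ h)·L(α₂ h)·L(α₁ h). Then (fun h : ℝ => R(−h)·R(h) − 1) is O(h¹⁰) as h → 0; that is, the real projection of the complex fourth-order triple-jump composition is pseudo-symmetric of order 9 for the harmonic oscillator. -/
open Matrix Asymptotics Filter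

attribute [local instance] Matrix.normedAddCommGroup Matrix.normedSpace

/-- Exact evolution matrix of the harmonic oscillator `q' = p`, `p' = -q`. -/
noncomputable def MH (z : ℂ) : Matrix (Fin 2) (Fin 2) ℂ :=
  !![Complex.cos z, Complex.sin z; -Complex.sin z, Complex.cos z]

/-- Exact evolution matrix of the kinetic part. -/
def MT (z : ℂ) : Matrix (Fin 2) (Fin 2) ℂ := !![1, z; 0, 1]

/-- Exact evolution matrix of the potential part. -/
def MV (z : ℂ) : Matrix (Fin 2) (Fin 2) ℂ := !![1, 0; -z, 1]

/-- The leapfrog/Strang splitting matrix. -/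
noncomputable def L (z : ℂ) : Matrix (Fin 2) (Fin 2) ℂ := MT (z / 2) * MV z * MT (z / 2)

/-- The complex triple-jump coefficient `α₁ = 1/(2 − 2^{1/3} e^{2πi/3})` (`k = 1`). -/
noncomputable def β₁ : ℂ :=
  (2 - ((2 : ℝ) ^ ((1 : ℝ) / 3) : ℝ) * Complex.exp (2 * Real.pi * Complex.I / 3))⁻¹

/-- The coefficient `α₂ = 1 − 2α₁`. -/
noncomputable def β₂ : ℂ := 1 - 2 * β₁

/-- The complex triple-jump palindromic composition `S_{α₁h} ∘ S_{α₂h} ∘ S_{α₁h}`. -/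
noncomputable def Tjump (h : ℝ) : Matrix (Fin 2) (Fin 2) ℂ :=
  L (β₁ * (h : ℂ)) * L (β₂ * (h : ℂ)) * L (β₁ * (h : ℂ))

/-- The real projection of the complex triple-jump composition. -/
noncomputable def Rproj (h : ℝ) : Matrix (Fin 2) (Fin 2) ℝ := (Tjump h).map Complex.re

/-!
Each leapfrog step is time-reversible, `L (-z) * L z = 1`, hence so is the palindromic
composition: `T (-h) * T h = 1` for the complex matrix `T h` whose real part is `R h`.
Taking real parts of this identity gives `R (-h) * R h - 1 = Im T (-h) * Im T h`.
Since `2 α₁³ + α₂³ = 0`, the method has order four and its Taylor expansion agrees with the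
real exact flow up to `h⁴`, so `Im T h = O(h⁵)` and the defect is `O(h¹⁰)`.
-/

theorem Matrix.map_re_mul {n : Type*} [Fintype n] (A B : Matrix n n ℂ) :
    (A * B).map Complex.re = A.map Complex.re * B.map Complex.re
      - A.map Complex.im * B.map Complex.im := by
  ext i j
  simp [Matrix.mul_apply, Complex.re_sum, Finset.sum_sub_distrib]

theorem Matrix.map_re_mul_sub_one_of_mul_eq_one {n : Type*} [Fintype n] [DecidableEq n]
    {A B : Matrix n n ℂ} (hAB : A * B = 1) :
    A.map Complex.re * B.map Complex.re - 1 = A.map Complex.im * B.map Complex.im := by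
  have h := Matrix.map_re_mul A B
  rw [hAB, Matrix.map_one Complex.re Complex.zero_re Complex.one_re] at h
  rw [h]
  abel

theorem Matrix.map_im_map_ofReal_add_smul {m n : Type*} (P : Matrix m n ℝ) (E : Matrix m n ℂ)
    (r : ℝ) :
    (P.map Complex.ofReal + (r : ℂ) • E).map Complex.im = r • E.map Complex.im := by
  ext i j
  simp

theorem isBigO_pow_smul_of_continuousAt {E : Type*} [NormedAddCommGroup E] [NormedSpace ℝ E]
    {g : ℝ → E} (hg : ContinuousAt g 0) (k : ℕ) :
    (fun h : ℝ => h ^ k • g h) =O[nhds 0] fun h : ℝ => h ^ k := by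
  simpa using (isBigO_refl (fun h : ℝ => h ^ k) (nhds 0)).smul (hg.tendsto.isBigO_one ℝ)

theorem mul_palindrome_eq_one {M : Type*} [Monoid M] {a a' b b' : M} (ha : a' * a = 1)
    (hb : b' * b = 1) : a' * b' * a' * (a * b * a) = 1 := by
  simp only [mul_assoc]
  rw [← mul_assoc a' a, ha, one_mul, ← mul_assoc b' b, hb, one_mul, ha]

theorem MT_neg_mul_self (z : ℂ) : MT (-z) * MT z = 1 := by
  ext i j
  fin_cases i <;> fin_cases j <;> simp [MT, Matrix.mul_apply, Fin.sum_univ_two]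

theorem MV_neg_mul_self (z : ℂ) : MV (-z) * MV z = 1 := by
  ext i j
  fin_cases i <;> fin_cases j <;> simp [MV, Matrix.mul_apply, Fin.sum_univ_two]

theorem L_neg_mul_self (z : ℂ) : L (-z) * L z = 1 := by
  rw [L, L, neg_div]
  exact mul_palindrome_eq_one (MT_neg_mul_self _) (MV_neg_mul_self z)

theorem Tjump_neg_mul_self (h : ℝ) : Tjump (-h) * Tjump h = 1 := by
  simp only [Tjump, Complex.ofReal_neg, mul_neg]
  exact mul_palindrome_eq_one (L_neg_mul_self _) (L_neg_mul_self _)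

theorem L_eq (z : ℂ) : L z = !![1 - z ^ 2 / 2, z - z ^ 3 / 4; -z, 1 - z ^ 2 / 2] := by
  ext i j
  fin_cases i <;> fin_cases j <;>
    simp [L, MT, MV, Matrix.mul_apply, Fin.sum_univ_two] <;> ring

theorem cbrt_two_mul_exp_pow_three :
    ((((2 : ℝ) ^ ((1 : ℝ) / 3) : ℝ) : ℂ) * Complex.exp (2 * Real.pi * Complex.I / 3)) ^ 3 =
      2 := by
  have hcbrt : ((2 : ℝ) ^ ((1 : ℝ) / 3)) ^ 3 = 2 := by
    rw [← Real.rpow_natCast, ← Real.rpow_mul (by norm_num)]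
    norm_num
  have hroot : Complex.exp (2 * Real.pi * Complex.I / 3) ^ 3 = 1 := by
    rw [← Complex.exp_nat_mul, show ((3 : ℕ) : ℂ) * (2 * Real.pi * Complex.I / 3)
      = 2 * Real.pi * Complex.I by push_cast; ring, Complex.exp_two_pi_mul_I]
  rw [mul_pow, ← Complex.ofReal_pow, hcbrt, hroot]
  norm_num

theorem two_mul_β₁_pow_three_add_β₂_pow_three : 2 * β₁ ^ 3 + β₂ ^ 3 = 0 := by
  set c : ℂ :=
    (((2 : ℝ) ^ ((1 : ℝ) / 3) : ℝ) : ℂ) * Complex.exp (2 * Real.pi * Complex.I / 3)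
  have hc : c ^ 3 = 2 := cbrt_two_mul_exp_pow_three
  have hden : 2 - c ≠ 0 := fun h => by
    rw [show c = 2 by linear_combination -h] at hc
    norm_num at hc
  have hβ₂ : β₂ = -c * β₁ := by
    rw [β₂, show β₁ = (2 - c)⁻¹ from rfl]
    field_simp
    ring
  rw [hβ₂]
  linear_combination β₁ ^ 3 * -hc

/-- Degree-four Taylor polynomial of the exact flow `MH h`. -/
noncomputable def tjumpTaylor (h : ℝ) : Matrix (Fin 2) (Fin 2) ℝ :=
  !![1 - h ^ 2 / 2 + h ^ 4 / 24, h - h ^ 3 / 6; -h + h ^ 3 / 6, 1 - h ^ 2 / 2 + h ^ 4 / 24]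

noncomputable def tjumpRemainder (h : ℝ) : Matrix (Fin 2) (Fin 2) ℂ :=
  !![h * (1 / 144 - β₁ / 24 + β₁ ^ 2 / 16),
     β₁ / 24 - β₁ ^ 2 / 24 + h ^ 2 * (1 / 192 - β₁ / 36 + β₁ ^ 2 / 24);
     -β₁ / 24 + β₁ ^ 2 / 12,
     h * (1 / 144 - β₁ / 24 + β₁ ^ 2 / 16)]

theorem continuous_tjumpRemainder : Continuous tjumpRemainder := by
  refine continuous_matrix fun i j => ?_
  fin_cases i <;> fin_cases j <;> simp only [tjumpRemainder] <;> fun_prop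

/-- Expand the product and reduce modulo the order-three condition `2 β₁³ + β₂³ = 0`. -/
theorem Tjump_eq_taylor_add (h : ℝ) :
    Tjump h = (tjumpTaylor h).map Complex.ofReal + ((h : ℂ) ^ 5) • tjumpRemainder h := by
  have hβ := two_mul_β₁_pow_three_add_β₂_pow_three
  simp only [β₂] at hβ
  ext i j
  fin_cases i <;> fin_cases j <;>
    simp [Tjump, β₂, L_eq, tjumpTaylor, tjumpRemainder, Matrix.mul_apply, Fin.sum_univ_two]
  · linear_combination
      -((h : ℂ) ^ 4 / 24 + (h : ℂ) ^ 6 * (1 / 144 - β₁ ^ 2 / 48 + β₁ ^ 3 / 24)) * hβ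
  · linear_combination -((h : ℂ) ^ 3 / 12 + (h : ℂ) ^ 5 * (β₁ / 24 - β₁ ^ 2 / 24)
      + (h : ℂ) ^ 7 * (1 / 192 + β₁ / 288 - β₁ ^ 3 / 96 + β₁ ^ 4 / 48)) * hβ
  · linear_combination -((h : ℂ) ^ 3 / 6 + (h : ℂ) ^ 5 * (-β₁ / 24 + β₁ ^ 2 / 12)) * hβ
  · linear_combination
      -((h : ℂ) ^ 4 / 24 + (h : ℂ) ^ 6 * (1 / 144 - β₁ ^ 2 / 48 + β₁ ^ 3 / 24)) * hβ

theorem map_im_Tjump (h : ℝ) :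
    (Tjump h).map Complex.im = h ^ 5 • (tjumpRemainder h).map Complex.im := by
  rw [Tjump_eq_taylor_add, ← Complex.ofReal_pow, Matrix.map_im_map_ofReal_add_smul]

theorem Rproj_neg_mul_Rproj_sub_one (h : ℝ) :
    Rproj (-h) * Rproj h - 1 =
      h ^ 10 • -((tjumpRemainder (-h)).map Complex.im * (tjumpRemainder h).map Complex.im) := by
  rw [Rproj, Rproj, Matrix.map_re_mul_sub_one_of_mul_eq_one (Tjump_neg_mul_self h),
    map_im_Tjump, map_im_Tjump, smul_mul_smul_comm, smul_neg, ← neg_smul]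
  congr 1
  ring

/-- the real projection of the complex fourth-order triple-jump
composition is pseudo-symmetric of order 9 for the harmonic oscillator. -/
theorem projected_complex_triple_jump_pseudo_symmetric_order_nine :
    (fun h : ℝ => Rproj (-h) * Rproj h - 1) =O[nhds 0] fun h : ℝ => h ^ 10 := by
  simp only [Rproj_neg_mul_Rproj_sub_one]
  refine isBigO_pow_smul_of_continuousAt (Continuous.continuousAt ?_) 10
  have hE := continuous_tjumpRemainder
  fun_prop
end

section
/- Let L(z) = M_T(z/2)·M_V(z)·M_T(z/2) be the leapfrog matrix for the harmonic oscillator, let α₁ = 1/(2 − 2^{1/3}·exp(2πi/3)), α₂ = 1 − 2α₁, and let R(h) be the entrywise real part of L(α₁ h)·L(α₂ h)·L(α₁ h). Then (fun h : ℝ => det R(h) − 1) is O(h¹⁰) as h → 0; that is, the real projection of the complex fourth-order triple-jump composition is pseudo-symplectic of order 9 for the harmonic oscillator. -/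
open Matrix Asymptotics Filter

attribute [local instance] Matrix.normedAddCommGroup Matrix.normedSpace

/-!
Write the triple-jump matrix as `T(h) = A(h) + i B(h)` with `A = Rproj h` and `B` real. Every
leapfrog factor has determinant one, hence so does `T(h)`, and for `2 × 2` matrices the real part
of `det (A + i B) = 1` reads `det A - det B = 1`. The coefficients satisfy the fourth-order
conditions `2α₁ + α₂ = 1` and `2α₁³ + α₂³ = 0` (indeed `α₂ = -2^{1/3} e^{2πi/3} α₁`), so `T(h)`
agrees with the real Taylor polynomial of the exact flow up to `h⁴`. Thus `B(h) = O(h⁵)` and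
`det A - 1 = det B = O(h¹⁰)`.
-/

theorem det_map_re_sub_det_map_im (M : Matrix (Fin 2) (Fin 2) ℂ) :
    (M.map Complex.re).det - (M.map Complex.im).det = M.det.re := by
  simp only [det_fin_two, map_apply, Complex.sub_re, Complex.mul_re]
  ring

theorem det_L (z : ℂ) : (L z).det = 1 := by
  rw [L_eq, det_fin_two_of]
  ring

theorem L_mul_L_mul_L_eq (β γ h : ℂ) (hs : 2 * β + γ = 1) (hc : 2 * β ^ 3 + γ ^ 3 = 0) :
    L (β * h) * L (γ * h) * L (β * h) =
      !![1 - h ^ 2 / 2 + h ^ 4 / 24 - β ^ 3 * γ * (β + γ) ^ 2 / 8 * h ^ 6,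
          h - h ^ 3 / 6 + β ^ 2 * (β + γ) ^ 3 / 4 * h ^ 5 - β ^ 4 * γ * (β + γ) ^ 2 / 16 * h ^ 7;
        -h + h ^ 3 / 6 - β ^ 2 * γ * (β + γ) ^ 2 / 4 * h ^ 5,
          1 - h ^ 2 / 2 + h ^ 4 / 24 - β ^ 3 * γ * (β + γ) ^ 2 / 8 * h ^ 6] := by
  obtain rfl : γ = 1 - 2 * β := by linear_combination hs
  rw [L_eq, L_eq, mul_fin_two, mul_fin_two]
  congrm !![?_, ?_; ?_, ?_]
  · linear_combination (-h ^ 4 / 24) * hc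
  · linear_combination (-h ^ 3 / 12) * hc
  · linear_combination (-h ^ 3 / 6) * hc
  · linear_combination (-h ^ 4 / 24) * hc

theorem two_mul_inv_pow_three_add_pow_three {d : ℂ} (hd : d ^ 3 = 2) :
    2 * (2 - d)⁻¹ ^ 3 + (1 - 2 * (2 - d)⁻¹) ^ 3 = 0 := by
  have hd2 : 2 - d ≠ 0 := by
    intro h
    norm_num [show d = 2 by linear_combination -h] at hd
  field_simp
  linear_combination -hd

theorem rpow_one_third_mul_exp_pow_three :
    (((2 : ℝ) ^ ((1 : ℝ) / 3) : ℝ) * Complex.exp (2 * Real.pi * Complex.I / 3) : ℂ) ^ 3 = 2 := by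
  have hc : ((2 : ℝ) ^ ((1 : ℝ) / 3)) ^ 3 = 2 := by
    rw [one_div]
    exact_mod_cast Real.rpow_inv_natCast_pow (by norm_num : (0 : ℝ) ≤ 2) three_ne_zero
  have hω : Complex.exp (2 * Real.pi * Complex.I / 3) ^ 3 = 1 := by
    exact_mod_cast (Complex.isPrimitiveRoot_exp 3 three_ne_zero).pow_eq_one
  rw [mul_pow, hω, mul_one, ← Complex.ofReal_pow, hc, Complex.ofReal_ofNat]

theorem two_mul_β₁_add_β₂ : 2 * β₁ + β₂ = 1 := by
  rw [β₂]
  ring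

theorem det_Tjump (h : ℝ) : (Tjump h).det = 1 := by
  simp only [Tjump, det_mul, det_L, mul_one]

theorem det_Rproj_sub_one (h : ℝ) : (Rproj h).det - 1 = ((Tjump h).map Complex.im).det := by
  have := det_map_re_sub_det_map_im (Tjump h)
  rw [det_Tjump, Complex.one_re] at this
  rw [Rproj]
  linarith

theorem exists_Tjump_map_im_eq : ∃ a b c d : ℝ, ∀ h : ℝ,
    (Tjump h).map Complex.im = h ^ 5 • !![a * h, b + c * h ^ 2; d, a * h] := by
  refine ⟨-(β₁ ^ 3 * β₂ * (β₁ + β₂) ^ 2 / 8).im, (β₁ ^ 2 * (β₁ + β₂) ^ 3 / 4).im,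
    -(β₁ ^ 4 * β₂ * (β₁ + β₂) ^ 2 / 16).im, -(β₁ ^ 2 * β₂ * (β₁ + β₂) ^ 2 / 4).im, fun h => ?_⟩
  rw [Tjump, L_mul_L_mul_L_eq _ _ _ two_mul_β₁_add_β₂ two_mul_β₁_pow_three_add_β₂_pow_three]
  ext i j
  fin_cases i <;> fin_cases j <;>
    simp only [← Complex.ofReal_pow, Complex.sub_im, Complex.add_im, Complex.neg_im, Complex.one_im,
      Complex.div_ofNat_im, Complex.ofReal_im, Complex.im_mul_ofReal, map_apply, of_apply,
      Matrix.smul_apply, Fin.zero_eta, Fin.mk_one, cons_val', cons_val_zero, cons_val_one,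
      cons_val_fin_one, smul_eq_mul] <;> ring

/-- the real projection of the complex fourth-order triple-jump
composition is pseudo-symplectic of order 9 for the harmonic oscillator. -/
theorem projected_complex_triple_jump_pseudo_symplectic_order_nine :
    (fun h : ℝ => (Rproj h).det - 1) =O[nhds 0] fun h : ℝ => h ^ 10 := by
  obtain ⟨a, b, c, d, him⟩ := exists_Tjump_map_im_eq
  have hdet (h : ℝ) :
      (Rproj h).det - 1 = h ^ 10 * (a ^ 2 * h ^ 2 - (b + c * h ^ 2) * d) := by
    rw [det_Rproj_sub_one, him, det_smul, det_fin_two_of, Fintype.card_fin]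
    ring
  have hbdd : (fun h : ℝ => a ^ 2 * h ^ 2 - (b + c * h ^ 2) * d) =O[nhds 0] fun _ => (1 : ℝ) :=
    (Continuous.tendsto (by fun_prop) 0).isBigO_one ℝ
  simpa only [hdet, mul_one] using (isBigO_refl (fun h : ℝ => h ^ 10) _).mul hbdd
end
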